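/- For every even integer r ≥ 4, every r-regular graph admits a zero-sum 3-flow. -/

import Mathlib

open Finset SimpleGraph

/-!
Write `r = 2k`. Hall's theorem, matching the `n k` pairs (vertex, slot) with the `n k` edges
through that vertex, orients `G` so that every vertex has in- and out-degree `k`. Hall's theorem
again (König) splits this `k`-regular digraph, given by its out-neighbourhoods `out`, into `k`
permutations: its arcs get colours in `Fin k` such that each colour leaves and enters every vertex
exactly once. Give colour `i` a weight `c i ∈ {±1, ±2}` with `∑ c i = 0` (possible as `k ≥ 2`) and
each edge the weight of its arc; the sum at every vertex is then `2 ∑ c i = 0`.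
-/

theorem Fintype.exists_injective_of_biregular {α β : Type*} [Fintype α] [Fintype β]
    (r : α → β → Prop) [DecidableRel r] {d : ℕ} (hd : 0 < d)
    (hα : ∀ a, d ≤ #{b | r a b}) (hβ : ∀ b, #{a | r a b} ≤ d) :
    ∃ f : α → β, Function.Injective f ∧ ∀ a, r a (f a) := by
  refine (Fintype.all_card_le_filter_rel_iff_exists_injective r).1 fun A => ?_
  refine Nat.le_of_mul_le_mul_right (card_mul_le_card_mul r (m := d) (n := d) ?_ ?_) hd
  · intro a ha
    refine (hα a).trans (card_le_card fun b hb => ?_)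
    simp only [mem_filter, mem_univ, true_and, bipartiteAbove] at hb ⊢
    exact ⟨⟨a, ha, hb⟩, hb⟩
  · intro b _
    exact (card_le_card (filter_subset_filter _ (subset_univ A))).trans (hβ b)

theorem exists_small_nonzero_sum_eq_zero {k : ℕ} (hk : 2 ≤ k) :
    ∃ c : Fin k → ℤ, (∀ i, c i ≠ 0 ∧ (c i).natAbs ≤ 2) ∧ ∑ i, c i = 0 := by
  induction k using Nat.strong_induction_on with
  | _ k ih =>
    obtain rfl | rfl | ⟨m, rfl, hm⟩ : k = 2 ∨ k = 3 ∨ ∃ m, k = m + 2 ∧ 2 ≤ m := by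
      rcases k with _ | _ | _ | _ | m <;> simp_all
    · exact ⟨![1, -1], by decide, by decide⟩
    · exact ⟨![2, -1, -1], by decide, by decide⟩
    · obtain ⟨c, hc, hsum⟩ := ih m (by omega) hm
      refine ⟨Fin.append c ![1, -1], fun i => ?_, ?_⟩
      · refine Fin.addCases (fun i => ?_) (fun i => ?_) i
        · simpa only [Fin.append_left] using hc i
        · simp only [Fin.append_right]; fin_cases i <;> decide
      · simp [Fin.sum_univ_add, hsum]

theorem Finset.sum_comp_eq_sum_univ_of_card_fiber_eq_one {α ι M : Type*} [Fintype ι]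
    [DecidableEq ι] [AddCommMonoid M] {s : Finset α} {φ : α → ι} (c : ι → M)
    (h : ∀ i, #{a ∈ s | φ a = i} = 1) : ∑ a ∈ s, c (φ a) = ∑ i, c i := by
  rw [← sum_fiberwise s φ]
  refine sum_congr rfl fun i _ => ?_
  rw [sum_congr rfl fun a ha => congrArg c (mem_filter.1 ha).2, sum_const, h, one_smul]

section Digraph

variable {V : Type*} [Fintype V] [DecidableEq V]

theorem exists_perm_forall_mem_of_regular {k : ℕ} (hk : 0 < k) {out : V → Finset V}
    (hout : ∀ v, #(out v) = k) (hin : ∀ v, #{u | v ∈ out u} = k) :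
    ∃ σ : Equiv.Perm V, ∀ v, σ v ∈ out v := by
  obtain ⟨σ, hinj, hσ⟩ := Fintype.exists_injective_of_biregular (fun u v => v ∈ out u) hk
    (fun u => by rw [filter_mem_eq_inter, univ_inter, hout]) (fun v => (hin v).le)
  exact ⟨Equiv.ofBijective σ hinj.bijective_of_finite, hσ⟩

theorem card_filter_mem_erase_perm {out : V → Finset V} (σ : Equiv.Perm V)
    (hσ : ∀ v, σ v ∈ out v) (v : V) :
    #{u | v ∈ (out u).erase (σ u)} = #{u | v ∈ out u} - 1 := by
  have : ({u | v ∈ (out u).erase (σ u)} : Finset V) =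
      ({u | v ∈ out u} : Finset V).erase (σ.symm v) := by
    ext u
    simp only [mem_filter, mem_univ, true_and, mem_erase, ne_eq, Equiv.eq_symm_apply, eq_comm]
  rw [this, card_erase_of_mem (by simpa using hσ (σ.symm v))]

theorem exists_arcColoring_of_regular {k : ℕ} (hk : 0 < k) {out : V → Finset V}
    (hout : ∀ v, #(out v) = k) (hin : ∀ v, #{u | v ∈ out u} = k) :
    ∃ ψ : V → V → Fin k, ∀ v i,
      #{u ∈ out v | ψ v u = i} = 1 ∧ #{u | v ∈ out u ∧ ψ u v = i} = 1 := by
  induction k, hk using Nat.le_induction generalizing out with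
  | base =>
    refine ⟨fun _ _ => 0, fun v i => ?_⟩
    simp only [Fin.fin_one_eq_zero i, filter_true, hout, and_true, hin, and_self]
  | succ k hk ih =>
    obtain ⟨σ, hσ⟩ := exists_perm_forall_mem_of_regular (by omega) hout hin
    obtain ⟨ψ, hψ⟩ := ih (out := fun u => (out u).erase (σ u))
      (fun v => by rw [card_erase_of_mem (hσ v), hout]; rfl)
      (fun v => by rw [card_filter_mem_erase_perm σ hσ, hin]; rfl)
    refine ⟨fun u w => if σ u = w then Fin.last k else (ψ u w).castSucc, fun v i => ?_⟩
    induction i using Fin.lastCases with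
    | last =>
      simp only [ite_eq_left_iff, Fin.castSucc_ne_last, imp_false, not_not]
      constructor
      · rw [filter_eq, if_pos (hσ v), card_singleton]
      · rw [card_eq_one]
        refine ⟨σ.symm v, ?_⟩
        ext u
        simp only [mem_filter, mem_univ, true_and, mem_singleton, ← Equiv.eq_symm_apply]
        exact ⟨And.right, fun h => ⟨by simpa [h] using hσ u, h⟩⟩
    | cast i =>
      have hcast : ∀ u w, (if σ u = w then Fin.last k else (ψ u w).castSucc) = i.castSucc ↔
          w ≠ σ u ∧ ψ u w = i := by
        intro u w
        split_ifs with h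
        · simpa [h] using (Fin.castSucc_ne_last i).symm
        · simp [Ne.symm h, eq_comm]
      simp only [hcast]
      refine ⟨(congrArg card ?_).trans (hψ v i).1, (congrArg card ?_).trans (hψ v i).2⟩ <;> ext u
      · simp only [mem_filter, mem_erase, and_assoc, and_left_comm]
      · simp only [mem_filter, mem_univ, true_and, mem_erase, and_assoc, and_left_comm]

end Digraph

namespace SimpleGraph

variable {V : Type*} [Fintype V] {G : SimpleGraph V} [DecidableRel G.Adj]

theorem IsRegularOfDegree.two_mul_card_edgeSet {d : ℕ} (h : G.IsRegularOfDegree d) :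
    2 * Fintype.card G.edgeSet = Fintype.card V * d := by
  rw [← edgeFinset_card, ← sum_degrees_eq_twice_card_edges, sum_congr rfl fun v _ => h.degree_eq v,
    sum_const, card_univ, smul_eq_mul]

variable [DecidableEq V]

theorem card_filter_mem_edgeSet (v : V) :
    #{e : G.edgeSet | v ∈ (e : Sym2 V)} = G.degree v := by
  rw [← card_incidenceSet_eq_degree, ← Fintype.card_subtype]
  exact Fintype.card_congr (Equiv.subtypeSubtypeEquivSubtypeInter (· ∈ G.edgeSet) (v ∈ ·))

theorem IsRegularOfDegree.exists_bijective_mem {k : ℕ} (hreg : G.IsRegularOfDegree (k + k))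
    (hk : 0 < k) :
    ∃ H : V × Fin k → G.edgeSet, Function.Bijective H ∧ ∀ p, p.1 ∈ (H p : Sym2 V) := by
  obtain ⟨H, hHinj, hH⟩ := Fintype.exists_injective_of_biregular
    (fun (p : V × Fin k) (e : G.edgeSet) => p.1 ∈ (e : Sym2 V)) (d := k + k) (by omega)
    (fun p => by rw [card_filter_mem_edgeSet, hreg.degree_eq]) fun e => by
      rw [show ({p : V × Fin k | p.1 ∈ (e : Sym2 V)} : Finset _) = (e : Sym2 V).toFinset ×ˢ univ by
        ext; simp, card_product, card_univ, Fintype.card_fin, Sym2.card_toFinset]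
      split_ifs <;> omega
  refine ⟨H, (Fintype.bijective_iff_injective_and_card H).2 ⟨hHinj, ?_⟩, hH⟩
  have := hreg.two_mul_card_edgeSet
  rw [Fintype.card_prod, Fintype.card_fin]
  linarith

theorem IsRegularOfDegree.exists_balanced_orientation {k : ℕ}
    (hreg : G.IsRegularOfDegree (k + k)) (hk : 0 < k) :
    ∃ out : V → Finset V, (∀ u v, v ∈ out u → G.Adj u v) ∧
      (∀ u v, G.Adj u v → (v ∈ out u ↔ u ∉ out v)) ∧ ∀ v, #(out v) = k := by
  obtain ⟨H, ⟨hHinj, hHsurj⟩, hH⟩ := hreg.exists_bijective_mem hk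
  -- each edge `H (u, i)` is oriented away from `u`, the vertex owning its slot
  refine ⟨fun u => univ.image fun i => Sym2.Mem.other (hH (u, i)), ?_⟩
  have hmem : ∀ u v, v ∈ univ.image (fun i => Sym2.Mem.other (hH (u, i))) ↔
      ∃ i, (H (u, i) : Sym2 V) = s(u, v) := by
    simp only [mem_image, mem_univ, true_and]
    refine fun u v => exists_congr fun i => ?_
    rw [← Sym2.congr_right (a := u), Sym2.other_spec]
  simp only [hmem]
  refine ⟨fun u v ⟨i, hi⟩ => G.mem_edgeSet.1 (hi ▸ (H (u, i)).2), fun u v huv => ⟨?_, ?_⟩,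
    fun u => ?_⟩
  · rintro ⟨i, hi⟩ ⟨j, hj⟩
    have := hHinj (Subtype.ext (hi.trans (hj.trans Sym2.eq_swap).symm))
    exact huv.ne (Prod.ext_iff.1 this).1
  · intro hvu
    obtain ⟨⟨w, i⟩, hwi⟩ := hHsurj ⟨s(u, v), huv⟩
    have hw : w ∈ s(u, v) := by simpa [hwi] using hH (w, i)
    rcases Sym2.mem_iff.1 hw with rfl | rfl
    · exact ⟨i, by simp [hwi]⟩
    · exact absurd ⟨i, by simp [hwi, Sym2.eq_swap]⟩ hvu
  · rw [card_image_of_injective _ fun i j hij => ?_, card_univ, Fintype.card_fin]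
    have := Sym2.other_spec (hH (u, i))
    rw [hij, Sym2.other_spec (hH (u, j))] at this
    simpa using hHinj (Subtype.ext this).symm

theorem IsRegularOfDegree.card_filter_mem_eq_of_orientation {k : ℕ}
    (hreg : G.IsRegularOfDegree (k + k))
    {out : V → Finset V} (hadj : ∀ u v, v ∈ out u → G.Adj u v)
    (horient : ∀ u v, G.Adj u v → (v ∈ out u ↔ u ∉ out v)) (hout : ∀ v, #(out v) = k) (v : V) :
    #{u | v ∈ out u} = k := by
  have : ({u | v ∈ out u} : Finset V) = G.neighborFinset v \ out v := by
    ext u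
    simp only [mem_filter, mem_univ, true_and, mem_sdiff, mem_neighborFinset]
    refine ⟨fun h => ⟨(hadj u v h).symm, (horient u v (hadj u v h)).1 h⟩, fun ⟨huv, h⟩ => ?_⟩
    exact not_not.1 ((horient v u huv).not.1 h)
  rw [this, card_sdiff_of_subset fun u hu => (G.mem_neighborFinset v u).2 (hadj v u hu),
    card_neighborFinset_eq_degree, hreg.degree_eq, hout]
  omega

theorem sum_incidenceFinset_eq_sum_neighborFinset {M : Type*} [AddCommMonoid M]
    (f : Sym2 V → M) (v : V) :
    ∑ e ∈ G.incidenceFinset v, f e = ∑ u ∈ G.neighborFinset v, f s(v, u) := by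
  refine (sum_bij (fun u _ => s(v, u)) (fun u hu => ?_) (fun _ _ _ _ => Sym2.congr_right.1)
    (fun e he => ?_) fun _ _ => rfl).symm
  · simpa [mk'_mem_incidenceSet_left_iff] using hu
  · obtain ⟨he, hv⟩ := (G.mem_incidenceFinset v e).1 he
    rw [← Sym2.other_spec hv] at he ⊢
    exact ⟨_, (G.mem_neighborFinset v _).2 he, rfl⟩

theorem sum_incidenceFinset_lift_add {M : Type*} [AddCommMonoid M] (g : V → V → M)
    (hg : ∀ u w, ¬G.Adj u w → g u w = 0) (v : V) :
    ∑ e ∈ G.incidenceFinset v, Sym2.lift ⟨fun u w => g u w + g w u, fun _ _ => add_comm _ _⟩ e =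
      ∑ u, g v u + ∑ u, g u v := by
  rw [sum_incidenceFinset_eq_sum_neighborFinset, ← sum_add_distrib,
    sum_subset (subset_univ _) fun u _ hu => ?_]
  · rfl
  · rw [mem_neighborFinset] at hu
    simp [hg v u hu, hg u v (mt G.adj_symm hu)]

end SimpleGraph

/-- For every even integer `r ≥ 4`, every `r`-regular graph admits a zero-sum 3-flow:
values from `{±1, ±2}` with zero sum at every vertex. -/
theorem stmt_5 {V : Type*} [Fintype V] [DecidableEq V] (G : SimpleGraph V)
    [DecidableRel G.Adj] (r : ℕ) (hEven : Even r) (hr : 4 ≤ r)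
    (hreg : G.IsRegularOfDegree r) :
    ∃ f : Sym2 V → ℤ,
      (∀ e ∈ G.edgeFinset, f e ≠ 0 ∧ (f e).natAbs ≤ 2) ∧
      (∀ v : V, ∑ e ∈ G.incidenceFinset v, f e = 0) := by
  obtain ⟨k, rfl⟩ := hEven
  obtain ⟨out, hadj, horient, hout⟩ := hreg.exists_balanced_orientation (by omega)
  obtain ⟨ψ, hψ⟩ := exists_arcColoring_of_regular (by omega) hout
    (hreg.card_filter_mem_eq_of_orientation hadj horient hout)
  obtain ⟨c, hc, hsum⟩ := exists_small_nonzero_sum_eq_zero (k := k) (by omega)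
  let g : V → V → ℤ := fun u w => if w ∈ out u then c (ψ u w) else 0
  refine ⟨Sym2.lift ⟨fun u w => g u w + g w u, fun _ _ => add_comm _ _⟩, ?_, fun v => ?_⟩
  · intro e he
    induction e using Sym2.ind with | _ u w =>
    have huw : G.Adj u w := by simpa using he
    by_cases h : w ∈ out u
    · simp [g, h, (horient u w huw).1 h, hc]
    · simp [g, h, not_not.1 ((horient u w huw).not.1 h), hc]
  · rw [sum_incidenceFinset_lift_add g (fun u w h => if_neg (mt (hadj u w) h))]
    simp only [g, ← sum_filter, filter_univ_mem]
    rw [sum_comp_eq_sum_univ_of_card_fiber_eq_one c fun i => (hψ v i).1,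
      sum_comp_eq_sum_univ_of_card_fiber_eq_one (φ := (ψ · v)) c fun i => by
        rw [filter_filter]; exact (hψ v i).2, hsum, add_zero]
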